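/- The internal (loss-code) encoding unitary maps computational basis inputs to products of GHZ-type states: for every x = (x₁,…,x₅) ∈ {0,1}⁵, U_enc(|x⟩ ⊗ |00000⟩ ⊗ |00000⟩) = 2^{−3/2} · ⊗_{d=0}^{2} (|x₁x₂x₃x₄ 0⟩ + (−1)^{x₅} |x̄₁x̄₂x̄₃x̄₄ 1⟩), where x̄ᵢ := 1 − xᵢ. In particular, the all-zero input is encoded as the tensor product of three 5-qubit GHZ states 2^{−3/2}(|00000⟩ + |11111⟩)^{⊗3}. -/

import Mathlib

open scoped BigOperators

noncomputable section

/-- The 15-qubit state space `V₁₅ = (Fin 15 → Fin 2) → ℂ`, organized as three blocks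
`(0), (1), (2)` of five qubits each. -/
abbrev V15 : Type := EuclideanSpace ℂ (Fin 15 → Fin 2)

/-- The tensor position of qubit `i+1` (`i : Fin 5`, 0-indexed) of block `d`. -/
def pos (d : Fin 3) (i : Fin 5) : Fin 15 :=
  ⟨5 * d.val + i.val, by have hd := d.isLt; have hi := i.isLt; omega⟩

/-- The CNOT unitary on `V₁₅` with control `a` and target `b`. -/
def CNOT (a b : Fin 15) (ψ : V15) : V15 :=
  WithLp.toLp 2 (fun y => ψ (if y a = 1 then Function.update y b (1 - y b) else y))

/-- The Hadamard unitary acting on position `a` of `V₁₅`. -/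
def Had (a : Fin 15) (ψ : V15) : V15 :=
  WithLp.toLp 2 (fun y => (Real.sqrt 2 : ℂ)⁻¹ *
    ∑ b : Fin 2, (-1 : ℂ) ^ (b.val * (y a).val) * ψ (Function.update y a b))

/-- The internal encoding unitary of the quantum loss-correcting code:
`U_enc = (∏_{d=0}^{2} ∏_{i=1}^{4} C_{5(d),i(d)}) ∘ (∏_{d=0}^{2} H_{5(d)}) ∘
(∏_{d=1}^{2} ∏_{i=1}^{5} C_{i(0),i(d)})`, products applied right to left
(the CNOTs within each product pairwise commute). -/
def Uenc : V15 → V15 :=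
  (CNOT (pos 0 4) (pos 0 0) ∘ CNOT (pos 0 4) (pos 0 1) ∘ CNOT (pos 0 4) (pos 0 2) ∘
     CNOT (pos 0 4) (pos 0 3) ∘
   CNOT (pos 1 4) (pos 1 0) ∘ CNOT (pos 1 4) (pos 1 1) ∘ CNOT (pos 1 4) (pos 1 2) ∘
     CNOT (pos 1 4) (pos 1 3) ∘
   CNOT (pos 2 4) (pos 2 0) ∘ CNOT (pos 2 4) (pos 2 1) ∘ CNOT (pos 2 4) (pos 2 2) ∘
     CNOT (pos 2 4) (pos 2 3)) ∘
  (Had (pos 0 4) ∘ Had (pos 1 4) ∘ Had (pos 2 4)) ∘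
  (CNOT (pos 0 0) (pos 1 0) ∘ CNOT (pos 0 1) (pos 1 1) ∘ CNOT (pos 0 2) (pos 1 2) ∘
     CNOT (pos 0 3) (pos 1 3) ∘ CNOT (pos 0 4) (pos 1 4) ∘
   CNOT (pos 0 0) (pos 2 0) ∘ CNOT (pos 0 1) (pos 2 1) ∘ CNOT (pos 0 2) (pos 2 2) ∘
     CNOT (pos 0 3) (pos 2 3) ∘ CNOT (pos 0 4) (pos 2 4))

/-- The computational basis input `|x⟩ ⊗ |00000⟩ ⊗ |00000⟩` of `V₁₅`. -/
def basisInput (x : Fin 5 → Fin 2) : V15 :=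
  WithLp.toLp 2 (fun y => if (∀ i : Fin 5, y (pos 0 i) = x i) ∧ (∀ i : Fin 5, y (pos 1 i) = 0)
      ∧ (∀ i : Fin 5, y (pos 2 i) = 0) then 1 else 0)

/-- The amplitude at `y` of the block-`d` factor `|x₁x₂x₃x₄0⟩ + (−1)^{x₅}|x̄₁x̄₂x̄₃x̄₄1⟩`,
where `x̄ᵢ = 1 − xᵢ`. -/
def ghzBlockAmp (x : Fin 5 → Fin 2) (d : Fin 3) (y : Fin 15 → Fin 2) : ℂ :=
  if (∀ i : Fin 4, y (pos d i.castSucc) = x i.castSucc) ∧ y (pos d 4) = 0 then 1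
  else if (∀ i : Fin 4, y (pos d i.castSucc) = 1 - x i.castSucc) ∧ y (pos d 4) = 1 then
    (-1 : ℂ) ^ (x 4).val
  else 0

/-- The product of GHZ-type states `⊗_{d=0}^{2} (|x₁x₂x₃x₄0⟩ + (−1)^{x₅}|x̄₁x̄₂x̄₃x̄₄1⟩)`. -/
def ghz3 (x : Fin 5 → Fin 2) : V15 := WithLp.toLp 2 (fun y => ∏ d : Fin 3, ghzBlockAmp x d y)

/-! The first CNOT layer copies block 0 into the two empty blocks, giving `|x⟩|x⟩|x⟩`. The
Hadamards send the fifth qubit `|x₅⟩` of each block to `2^{-1/2} ∑_b (-1)^{x₅ b} |b⟩`, and the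
last layer, controlled by that qubit, flips the first four qubits of its block exactly when
`b = 1`. So a block amplitude is `(-1)^{x₅ b}` times the indicator that the first four qubits,
each XOR-ed with the fifth, spell `x₁x₂x₃x₄`, which is the GHZ-type factor (`ghzBlockAmp_eq`). -/

lemma fin_two_add_eq_zero_iff {a b : Fin 2} : a + b = 0 ↔ a = b := by omega

@[simp] lemma pos_inj {d e : Fin 3} {i j : Fin 5} : pos d i = pos e j ↔ d = e ∧ i = j := by
  simp only [pos, Fin.ext_iff]
  omega

lemma CNOT_apply (a b : Fin 15) (ψ : V15) (y : Fin 15 → Fin 2) :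
    CNOT a b ψ y = ψ (Function.update y b (y b + y a)) := by
  obtain h | h : y a = 0 ∨ y a = 1 := by omega
  · simp [CNOT, h]
  · have flip : 1 - y b = y b + 1 := by omega
    simp [CNOT, h, flip]

lemma Had_apply (a : Fin 15) (ψ : V15) (y : Fin 15 → Fin 2) :
    Had a ψ y = (Real.sqrt 2 : ℂ)⁻¹ *
      (ψ (Function.update y a 0) + (-1 : ℂ) ^ (y a).val * ψ (Function.update y a 1)) := by
  simp [Had, Fin.sum_univ_two]

def fanOut : V15 → V15 :=
  CNOT (pos 0 0) (pos 1 0) ∘ CNOT (pos 0 1) (pos 1 1) ∘ CNOT (pos 0 2) (pos 1 2) ∘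
    CNOT (pos 0 3) (pos 1 3) ∘ CNOT (pos 0 4) (pos 1 4) ∘
  CNOT (pos 0 0) (pos 2 0) ∘ CNOT (pos 0 1) (pos 2 1) ∘ CNOT (pos 0 2) (pos 2 2) ∘
    CNOT (pos 0 3) (pos 2 3) ∘ CNOT (pos 0 4) (pos 2 4)

def hadamardLayer : V15 → V15 :=
  Had (pos 0 4) ∘ Had (pos 1 4) ∘ Had (pos 2 4)

def blockCNOTLayer : V15 → V15 :=
  CNOT (pos 0 4) (pos 0 0) ∘ CNOT (pos 0 4) (pos 0 1) ∘ CNOT (pos 0 4) (pos 0 2) ∘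
    CNOT (pos 0 4) (pos 0 3) ∘
  CNOT (pos 1 4) (pos 1 0) ∘ CNOT (pos 1 4) (pos 1 1) ∘ CNOT (pos 1 4) (pos 1 2) ∘
    CNOT (pos 1 4) (pos 1 3) ∘
  CNOT (pos 2 4) (pos 2 0) ∘ CNOT (pos 2 4) (pos 2 1) ∘ CNOT (pos 2 4) (pos 2 2) ∘
    CNOT (pos 2 4) (pos 2 3)

def copies (x : Fin 5 → Fin 2) : V15 :=
  WithLp.toLp 2 fun y => if ∀ d i, y (pos d i) = x i then 1 else 0

def phasedCopies (x : Fin 5 → Fin 2) : V15 :=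
  WithLp.toLp 2 fun y => (Real.sqrt 2 : ℂ)⁻¹ ^ 3 *
    (-1 : ℂ) ^ ((x 4).val * ((y (pos 0 4)).val + (y (pos 1 4)).val + (y (pos 2 4)).val)) *
    if ∀ d (i : Fin 4), y (pos d i.castSucc) = x i.castSucc then 1 else 0

lemma fanOut_basisInput (x : Fin 5 → Fin 2) : fanOut (basisInput x) = copies x := by
  ext y
  simp only [fanOut, Function.comp_apply, CNOT_apply, basisInput, copies, WithLp.ofLp_toLp,
    Fin.forall_fin_succ]
  refine if_congr ?_ rfl rfl
  simp [Function.update_apply, fin_two_add_eq_zero_iff]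
  intro h0 h1 h2 h3 h4
  simp only [h0, h1, h2, h3, h4]

lemma hadamardLayer_copies (x : Fin 5 → Fin 2) : hadamardLayer (copies x) = phasedCopies x := by
  ext y
  simp only [hadamardLayer, Function.comp_apply, Had_apply, copies, phasedCopies,
    WithLp.ofLp_toLp, Fin.forall_fin_succ]
  simp [Function.update_apply]
  obtain h | h : x 4 = 0 ∨ x 4 = 1 := by omega
  all_goals simp [h]; split_ifs <;> ring

lemma ghzBlockAmp_eq (x : Fin 5 → Fin 2) (d : Fin 3) (y : Fin 15 → Fin 2) :
    ghzBlockAmp x d y = (-1 : ℂ) ^ ((x 4).val * (y (pos d 4)).val) *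
      if ∀ i : Fin 4, y (pos d i.castSucc) + y (pos d 4) = x i.castSucc then 1 else 0 := by
  obtain h | h : y (pos d 4) = 0 ∨ y (pos d 4) = 1 := by omega
  · simp [ghzBlockAmp, h]
  · have flip (i : Fin 4) : y (pos d i.castSucc) + 1 = x i.castSucc ↔
        y (pos d i.castSucc) = 1 - x i.castSucc := by omega
    simp [ghzBlockAmp, h, flip]

lemma blockCNOTLayer_phasedCopies (x : Fin 5 → Fin 2) :
    blockCNOTLayer (phasedCopies x) = (Real.sqrt 2 : ℂ)⁻¹ ^ 3 • ghz3 x := by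
  ext y
  simp only [blockCNOTLayer, Function.comp_apply, CNOT_apply, phasedCopies, ghz3,
    PiLp.smul_apply, smul_eq_mul, Fin.prod_univ_three, ghzBlockAmp_eq]
  simp [Function.update_apply, Fin.forall_fin_succ, mul_add, pow_add]
  split_ifs <;> simp_all [mul_assoc]

/-- The internal (loss-code) encoding unitary maps computational basis inputs to products
of GHZ-type states: `U_enc(|x⟩ ⊗ |00000⟩ ⊗ |00000⟩) =
2^{−3/2} ⊗_{d=0}^{2} (|x₁x₂x₃x₄0⟩ + (−1)^{x₅}|x̄₁x̄₂x̄₃x̄₄1⟩)`. In particular the all-zero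
input is encoded as `2^{−3/2} (|00000⟩ + |11111⟩)^{⊗3}`. -/
theorem Uenc_basis_ghz (x : Fin 5 → Fin 2) :
    Uenc (basisInput x) = ((Real.sqrt 2 : ℂ)⁻¹ ^ 3) • ghz3 x := by
  calc Uenc (basisInput x)
      = blockCNOTLayer (hadamardLayer (fanOut (basisInput x))) := rfl
    _ = blockCNOTLayer (hadamardLayer (copies x)) := by rw [fanOut_basisInput]
    _ = blockCNOTLayer (phasedCopies x) := by rw [hadamardLayer_copies]
    _ = (Real.sqrt 2 : ℂ)⁻¹ ^ 3 • ghz3 x := blockCNOTLayer_phasedCopies x
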